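/- Let φ be a norm on ℝ² and let Ω ⊆ ℝ² be a bounded convex open set. Define v(r) = |Ω^r| for r ≥ 0. Then v(r) = |Ω| for all r ≤ r_Ω, v(r) = 0 for all r > R_Ω, and v is continuous and monotone decreasing on [r_Ω, R_Ω]; consequently, for every m ∈ [|Ω^{R_Ω}|, |Ω|] there exists a unique value r_m ∈ [r_Ω, R_Ω] such that v(r_m) = m. -/

import Mathlib

/-!
The plaquette `Ω^r` is open and convex and shrinks as `r` grows. If `W_R(x₀) ⊆ Ω` is a maximal
Wulff ball, convexity shows that the homothety of centre `x₀` and ratio `λ = (R - t)/(R - s)`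
maps `Ω^s` into `Ω^t`, so `|Ω^t| ≥ λⁿ |Ω^s|` in `ℝⁿ`; this gives continuity from the right.
Continuity from the left holds because, by compactness of the sets of admissible centres,
`⋂_{s<t} Ω^s` lies in the closure of `Ω^t`, whose boundary is null. The same compactness shows that the
`rW_φ`-condition holds at `r_Ω` itself; since a bounded set lies in the convex hull of its
frontier, this forces `Ω^{r_Ω} = Ω`.

For `r_Ω ≤ s < t ≤ R_Ω` the plaquettes `Ω^t ⊆ Ω^s` differ: if `Ω^t = Ω`, then `Ω` would satisfy
the `rW_φ`-condition at `t > r_Ω`; otherwise a boundary point of `Ω^t` inside `Ω` lies in a Wulff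
ball of radius `s` inside `Ω`, obtained by blending the ball of radius `t` that touches it with a
small ball around it. Nested open convex sets of equal area coincide, so `v` is strictly
decreasing on `[r_Ω, R_Ω]`, and the intermediate value theorem produces `r_m`.
-/

open MeasureTheory Set ENNReal Filter

noncomputable section

/-- `φ` is a norm on `ℝⁿ` (represented as `Fin n → ℝ`). -/
structure IsNorm {n : ℕ} (φ : (Fin n → ℝ) → ℝ) : Prop where
  nonneg : ∀ x, 0 ≤ φ x
  eq_zero_iff : ∀ x, φ x = 0 ↔ x = 0
  smul_eq : ∀ (a : ℝ) (x : Fin n → ℝ), φ (a • x) = |a| * φ x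
  add_le : ∀ x y, φ (x + y) ≤ φ x + φ y

/-- The divergence of a vector field `η : ℝⁿ → ℝⁿ`. -/
def diverg {n : ℕ} (η : (Fin n → ℝ) → (Fin n → ℝ)) (x : Fin n → ℝ) : ℝ :=
  ∑ i, fderiv ℝ η x (Pi.single i 1) i

/-- The anisotropic total variation `∫ φ*(Du)` of `u : ℝⁿ → ℝ`:
`sup { ∫ u div η dx : η ∈ C¹_c(ℝⁿ;ℝⁿ), φ(η(x)) ≤ 1 ∀ x }`, as an extended real. -/
def anisoTV {n : ℕ} (φ : (Fin n → ℝ) → ℝ) (u : (Fin n → ℝ) → ℝ) : ℝ≥0∞ :=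
  ⨆ η ∈ {η : (Fin n → ℝ) → (Fin n → ℝ) |
      ContDiff ℝ 1 η ∧ HasCompactSupport η ∧ ∀ x, φ (η x) ≤ 1},
    ENNReal.ofReal (∫ x, u x * diverg η x)

/-- `u ∈ BV(ℝⁿ)` (with respect to the anisotropic total variation). -/
def IsBV {n : ℕ} (φ : (Fin n → ℝ) → ℝ) (u : (Fin n → ℝ) → ℝ) : Prop :=
  Integrable u volume ∧ anisoTV φ u ≠ ⊤

/-- `u` is admissible for problem (1): `u ∈ BV(ℝⁿ)`, `u = 0` a.e. outside `Ω`,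
`u` is a.e. `ℕ`-valued, and `∫_Ω u = m`. -/
def Admissible {n : ℕ} (φ : (Fin n → ℝ) → ℝ) (Ω : Set (Fin n → ℝ)) (m : ℝ)
    (u : (Fin n → ℝ) → ℝ) : Prop :=
  IsBV φ u ∧ (∀ᵐ x ∂volume, x ∉ Ω → u x = 0) ∧
    (∀ᵐ x ∂volume, ∃ k : ℕ, u x = k) ∧ (∫ x in Ω, u x) = m

/-- `u` is a minimizer of problem (1). -/
def IsMinimizer {n : ℕ} (φ : (Fin n → ℝ) → ℝ) (Ω : Set (Fin n → ℝ)) (m : ℝ)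
    (u : (Fin n → ℝ) → ℝ) : Prop :=
  Admissible φ Ω m u ∧ ∀ v, Admissible φ Ω m v → anisoTV φ u ≤ anisoTV φ v

/-- The anisotropic perimeter `P_φ(E)` of a set `E ⊆ ℝⁿ`. -/
def anisoPerimeter {n : ℕ} (φ : (Fin n → ℝ) → ℝ) (E : Set (Fin n → ℝ)) : ℝ≥0∞ :=
  anisoTV φ (E.indicator (1 : (Fin n → ℝ) → ℝ))

/-- The Wulff ball `W_r(x) = {y : φ(y-x) < r}`. -/
def wulffBall {n : ℕ} (φ : (Fin n → ℝ) → ℝ) (x : Fin n → ℝ) (r : ℝ) : Set (Fin n → ℝ) :=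
  {y | φ (y - x) < r}

/-- `E` satisfies the `rW_φ`-condition. -/
def rWCond {n : ℕ} (φ : (Fin n → ℝ) → ℝ) (E : Set (Fin n → ℝ)) (r : ℝ) : Prop :=
  ∀ x ∈ frontier E, ∃ y, wulffBall φ y r ⊆ E ∧ x ∈ frontier (wulffBall φ y r)

/-- The Wulff plaquette `E^r`, the union of all Wulff balls of radius `r` contained
in `E` (with `E^0 = E`). -/
def plaquette {n : ℕ} (φ : (Fin n → ℝ) → ℝ) (E : Set (Fin n → ℝ)) (r : ℝ) :
    Set (Fin n → ℝ) :=
  if r = 0 then E else ⋃ (x) (_ : wulffBall φ x r ⊆ E), wulffBall φ x r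

/-- `R_Ω`: the maximal `R > 0` such that some Wulff ball of radius `R` is contained in `Ω`. -/
def maxInradius {n : ℕ} (φ : (Fin n → ℝ) → ℝ) (Ω : Set (Fin n → ℝ)) : ℝ :=
  sSup {R | 0 < R ∧ ∃ x, wulffBall φ x R ⊆ Ω}

/-- `r_Ω`: the maximal `r > 0` such that `Ω` satisfies the `rW_φ`-condition
(`0` if there is none, since `sSup ∅ = 0`). -/
def maxRollRadius {n : ℕ} (φ : (Fin n → ℝ) → ℝ) (Ω : Set (Fin n → ℝ)) : ℝ :=
  sSup {r | 0 < r ∧ rWCond φ Ω r}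

/-- The set of points of Lebesgue density `1` of `E`. -/
def densityPoints {n : ℕ} (E : Set (Fin n → ℝ)) : Set (Fin n → ℝ) :=
  {x | Tendsto (fun r : ℝ => volume (E ∩ Metric.ball x r) / volume (Metric.ball x r))
    (nhdsWithin 0 (Ioi 0)) (nhds 1)}

/-- `E` is a minimizer of problem (10): the constrained isoperimetric problem
minimizing `P_φ` among measurable subsets of `Ω` of prescribed measure `m`. -/
def IsIsopMinimizer {n : ℕ} (φ : (Fin n → ℝ) → ℝ) (Ω : Set (Fin n → ℝ)) (m : ℝ)
    (E : Set (Fin n → ℝ)) : Prop :=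
  MeasurableSet E ∧ E ⊆ Ω ∧ (volume E).toReal = m ∧
    ∀ F, MeasurableSet F → F ⊆ Ω → (volume F).toReal = m →
      anisoPerimeter φ E ≤ anisoPerimeter φ F

/-- The Euclidean norm on `ℝ²`. -/
def euclNorm (v : Fin 2 → ℝ) : ℝ := Real.sqrt (v 0 ^ 2 + v 1 ^ 2)

/-- The crystalline norm `φ(ν) = |ν₁| + |ν₂|` on `ℝ²`. -/
def crysNorm (v : Fin 2 → ℝ) : ℝ := |v 0| + |v 1|

/-- The open unit square `(0,1)² ⊆ ℝ²`. -/
def unitSquare : Set (Fin 2 → ℝ) := univ.pi fun _ => Ioo (0 : ℝ) 1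

/-- The closed unit square `[0,1]² ⊆ ℝ²`. -/
def closedUnitSquare : Set (Fin 2 → ℝ) := univ.pi fun _ => Icc (0 : ℝ) 1

/-- `j` is the essential supremum `‖u‖_∞` of `u`. -/
def IsEssSup (u : (Fin 2 → ℝ) → ℝ) (j : ℕ) : Prop :=
  (∀ᵐ x ∂volume, u x ≤ (j : ℝ)) ∧ ∀ c : ℝ, (∀ᵐ x ∂volume, u x ≤ c) → (j : ℝ) ≤ c

open Topology Bornology

theorem IsPreconnected.inter_frontier_nonempty {X : Type*} [TopologicalSpace X] {s t : Set X}
    (hs : IsPreconnected s) (hst : (s ∩ t).Nonempty) (hst' : (s \ t).Nonempty) :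
    (s ∩ frontier t).Nonempty := by
  by_contra h
  have hfr : ∀ x ∈ s, x ∈ closure t → x ∈ interior t := fun x hx hc =>
    by_contra fun hi => h ⟨x, hx, hc, hi⟩
  obtain ⟨x, hx, hxt⟩ := hst
  obtain ⟨y, hy, hyt⟩ := hst'
  obtain ⟨z, -, hzi, hzc⟩ := hs (interior t) (closure t)ᶜ isOpen_interior
    isClosed_closure.isOpen_compl (fun w hw => (em (w ∈ closure t)).imp (hfr w hw) id)
    ⟨x, hx, hfr x hx (subset_closure hxt)⟩ ⟨y, hy, fun hc => hyt (interior_subset (hfr y hy hc))⟩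
  exact hzc (interior_subset_closure hzi)

section NormedSpace

variable {E : Type*} [NormedAddCommGroup E] [NormedSpace ℝ E]

theorem Bornology.IsBounded.exists_nonneg_add_smul_mem_frontier {s : Set E} (hs : IsBounded s)
    {x v : E} (hx : x ∈ s) (hv : v ≠ 0) : ∃ τ : ℝ, 0 ≤ τ ∧ x + τ • v ∈ frontier s := by
  obtain ⟨C, hC⟩ := Metric.isBounded_iff.1 hs
  have hfar : x + ((|C| + 1) / ‖v‖) • v ∉ s := fun h => by
    have := hC h hx
    rw [dist_eq_norm, add_sub_cancel_left, norm_smul, Real.norm_of_nonneg (by positivity),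
      div_mul_cancel₀ _ (norm_ne_zero_iff.2 hv)] at this
    linarith [le_abs_self C]
  have hray : IsPreconnected ((fun τ : ℝ => x + τ • v) '' Ici 0) :=
    isPreconnected_Ici.image _ (by fun_prop)
  obtain ⟨-, ⟨τ, hτ, rfl⟩, hfr⟩ := hray.inter_frontier_nonempty ⟨x, ⟨0, self_mem_Ici, by simp⟩, hx⟩
    ⟨_, ⟨_, (by positivity : (0 : ℝ) ≤ (|C| + 1) / ‖v‖), rfl⟩, hfar⟩
  exact ⟨τ, hτ, hfr⟩

theorem Bornology.IsBounded.subset_convexHull_frontier [Nontrivial E] {s : Set E}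
    (hs : IsBounded s) : s ⊆ convexHull ℝ (frontier s) := by
  intro x hx
  obtain ⟨v, hv⟩ := exists_ne (0 : E)
  obtain ⟨a, ha, hav⟩ := hs.exists_nonneg_add_smul_mem_frontier hx hv
  obtain ⟨b, hb, hbv⟩ := hs.exists_nonneg_add_smul_mem_frontier hx (neg_ne_zero.2 hv)
  have hseg : x ∈ segment ℝ (x + b • -v) (x + a • v) := by
    rw [mem_segment_iff_sameRay]
    simpa using (SameRay.sameRay_nonneg_smul_right v ha).nonneg_smul_left hb
  exact (convex_convexHull ℝ _).segment_subset (subset_convexHull ℝ _ hbv)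
    (subset_convexHull ℝ _ hav) hseg

theorem IsOpen.subset_of_subset_closure_convex {U A : Set E} (hU : IsOpen U) (hA : IsOpen A)
    (hAc : Convex ℝ A) (h : U ⊆ closure A) : U ⊆ A := by
  rcases A.eq_empty_or_nonempty with rfl | hne
  · simpa using h
  rw [← hA.interior_eq,
    ← hAc.interior_closure_eq_interior_of_nonempty_interior (by rwa [hA.interior_eq])]
  exact interior_maximal h hU

theorem IsOpen.subset_of_measure_sdiff_eq_zero [MeasurableSpace E] {μ : Measure E}
    [μ.IsOpenPosMeasure] {U A : Set E} (hU : IsOpen U) (hA : IsOpen A) (hAc : Convex ℝ A)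
    (h : μ (U \ A) = 0) : U ⊆ A := by
  refine hU.subset_of_subset_closure_convex hA hAc fun x hx => by_contra fun hx' => ?_
  exact (hU.sdiff isClosed_closure).measure_ne_zero μ ⟨x, hx, hx'⟩
    (measure_mono_null (sdiff_subset_sdiff_right subset_closure) h)

end NormedSpace

theorem Real.nonempty_of_sSup_pos {s : Set ℝ} (h : 0 < sSup s) : s.Nonempty :=
  nonempty_iff_ne_empty.2 fun he => by simp [he] at h

theorem Real.bddAbove_of_sSup_pos {s : Set ℝ} (h : 0 < sSup s) : BddAbove s :=
  by_contra fun hs => by simp [Real.sSup_of_not_bddAbove hs] at h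

section WulffBall

variable {n : ℕ} {φ : (Fin n → ℝ) → ℝ}

namespace IsNorm

theorem map_zero (hφ : IsNorm φ) : φ 0 = 0 := (hφ.eq_zero_iff 0).2 rfl

theorem map_sub_rev (hφ : IsNorm φ) (x y : Fin n → ℝ) : φ (x - y) = φ (y - x) := by
  simpa [neg_sub] using hφ.smul_eq (-1) (y - x)

theorem map_smul_of_nonneg (hφ : IsNorm φ) {a : ℝ} (ha : 0 ≤ a) (x : Fin n → ℝ) :
    φ (a • x) = a * φ x := by
  rw [hφ.smul_eq, abs_of_nonneg ha]

theorem exists_le_mul_norm (hφ : IsNorm φ) : ∃ C, ∀ x, φ x ≤ C * ‖x‖ := by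
  refine ⟨∑ i, φ (Pi.single i 1), fun x => ?_⟩
  calc φ x = φ (∑ i, x i • Pi.single i 1) := by rw [← pi_eq_sum_univ' x]
    _ ≤ ∑ i, φ (x i • Pi.single i 1) :=
      Finset.le_sum_of_subadditive φ hφ.map_zero.le hφ.add_le _ _
    _ ≤ ∑ i, ‖x‖ * φ (Pi.single i 1) := Finset.sum_le_sum fun i _ => by
      rw [hφ.smul_eq, ← Real.norm_eq_abs]
      exact mul_le_mul_of_nonneg_right (norm_le_pi_norm x i) (hφ.nonneg _)
    _ = (∑ i, φ (Pi.single i 1)) * ‖x‖ := by rw [Finset.sum_mul]; simp_rw [mul_comm]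

theorem continuous (hφ : IsNorm φ) : Continuous φ := by
  obtain ⟨C, hC⟩ := hφ.exists_le_mul_norm
  refine (LipschitzWith.of_le_add_mul' C fun x y => ?_).continuous
  calc φ x ≤ φ (x - y) + φ y := by simpa using hφ.add_le (x - y) y
    _ ≤ φ y + C * dist x y := by rw [dist_eq_norm]; linarith [hC (x - y)]

theorem exists_pos_mul_norm_le (hφ : IsNorm φ) : ∃ c, 0 < c ∧ ∀ x, c * ‖x‖ ≤ φ x := by
  obtain ⟨c, hc, hcφ⟩ := (isCompact_sphere (0 : Fin n → ℝ) 1).exists_forall_le'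
    hφ.continuous.continuousOn (a := 0) fun x hx => (hφ.nonneg x).lt_of_ne' fun h0 => by
      simp [(hφ.eq_zero_iff x).1 h0] at hx
  refine ⟨c, hc, fun x => ?_⟩
  rcases eq_or_ne x 0 with rfl | hx
  · simp [hφ.map_zero]
  have hxn : 0 < ‖x‖ := norm_pos_iff.2 hx
  have := hcφ (‖x‖⁻¹ • x) (by simp [norm_smul, hxn.ne'])
  rwa [hφ.map_smul_of_nonneg (by positivity), le_inv_mul_iff₀ hxn, mul_comm] at this

theorem isClosed_setOf_map_sub_le (hφ : IsNorm φ) (x : Fin n → ℝ) (r : ℝ) :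
    IsClosed {y | φ (x - y) ≤ r} :=
  isClosed_le (hφ.continuous.comp (continuous_const.sub continuous_id)) continuous_const

end IsNorm

theorem mem_wulffBall {x y : Fin n → ℝ} {r : ℝ} : y ∈ wulffBall φ x r ↔ φ (y - x) < r :=
  Iff.rfl

theorem isOpen_wulffBall (hφ : IsNorm φ) (x : Fin n → ℝ) (r : ℝ) :
    IsOpen (wulffBall φ x r) :=
  isOpen_lt (hφ.continuous.comp (continuous_id.sub continuous_const)) continuous_const

theorem mem_wulffBall_self (hφ : IsNorm φ) {x : Fin n → ℝ} {r : ℝ} (hr : 0 < r) :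
    x ∈ wulffBall φ x r := by
  simpa [mem_wulffBall, hφ.map_zero]

theorem wulffBall_mono {x : Fin n → ℝ} {r s : ℝ} (h : s ≤ r) :
    wulffBall φ x s ⊆ wulffBall φ x r :=
  fun _ hz => hz.trans_le h

theorem wulffBall_subset_wulffBall (hφ : IsNorm φ) {x y : Fin n → ℝ} {r s : ℝ}
    (h : φ (x - y) ≤ r - s) : wulffBall φ x s ⊆ wulffBall φ y r := fun z hz =>
  calc φ (z - y) ≤ φ (z - x) + φ (x - y) := by simpa using hφ.add_le (z - x) (x - y)
    _ < r := by rw [mem_wulffBall] at hz; linarith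

theorem exists_wulffBall_subset_of_mem_nhds (hφ : IsNorm φ) {x : Fin n → ℝ}
    {U : Set (Fin n → ℝ)} (hU : U ∈ 𝓝 x) : ∃ δ > 0, wulffBall φ x δ ⊆ U := by
  obtain ⟨c, hc, hcφ⟩ := hφ.exists_pos_mul_norm_le
  obtain ⟨ε, hε, hεU⟩ := Metric.mem_nhds_iff.1 hU
  refine ⟨c * ε, by positivity, fun z hz => hεU ?_⟩
  rw [Metric.mem_ball, dist_eq_norm]
  exact lt_of_mul_lt_mul_left ((hcφ _).trans_lt hz) hc.le

theorem closure_wulffBall_subset (hφ : IsNorm φ) (x : Fin n → ℝ) (r : ℝ) :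
    closure (wulffBall φ x r) ⊆ {z | φ (z - x) ≤ r} :=
  closure_minimal (fun _ hz => (mem_wulffBall.1 hz).le)
    (isClosed_le (hφ.continuous.comp (continuous_id.sub continuous_const)) continuous_const)

theorem mem_closure_wulffBall (hφ : IsNorm φ) {x z : Fin n → ℝ} {r : ℝ} (hr : 0 < r)
    (hz : φ (z - x) ≤ r) : z ∈ closure (wulffBall φ x r) := by
  have hlim : Tendsto (fun l : ℝ => x + l • (z - x)) (𝓝[<] 1) (𝓝 z) := by
    have : Continuous fun l : ℝ => x + l • (z - x) := by fun_prop
    simpa using (this.tendsto 1).mono_left nhdsWithin_le_nhds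
  refine mem_closure_of_tendsto hlim ?_
  filter_upwards [Ioo_mem_nhdsLT zero_lt_one] with l hl
  rw [mem_wulffBall, add_sub_cancel_left, hφ.map_smul_of_nonneg hl.1.le]
  calc l * φ (z - x) ≤ l * r := mul_le_mul_of_nonneg_left hz hl.1.le
    _ < r := mul_lt_of_lt_one_left hr hl.2

theorem mem_frontier_wulffBall (hφ : IsNorm φ) {x z : Fin n → ℝ} {r : ℝ} (hr : 0 < r)
    (hz : φ (z - x) = r) : z ∈ frontier (wulffBall φ x r) := by
  rw [(isOpen_wulffBall hφ x r).frontier_eq]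
  exact ⟨mem_closure_wulffBall hφ hr hz.le, hz.not_lt⟩

theorem mem_frontier_wulffBall_of_mem_frontier (hφ : IsNorm φ) {Ω : Set (Fin n → ℝ)}
    (hΩ : IsOpen Ω) {x y : Fin n → ℝ} {r : ℝ} (hr : 0 < r) (hx : x ∈ frontier Ω)
    (hy : wulffBall φ y r ⊆ Ω) (hxy : φ (x - y) ≤ r) : x ∈ frontier (wulffBall φ y r) :=
  mem_frontier_wulffBall hφ hr <| hxy.antisymm <| not_lt.1 fun hlt =>
    (hΩ.frontier_eq ▸ hx).2 (hy hlt)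

theorem exists_mem_wulffBall_subset (hφ : IsNorm φ) {y z : Fin n → ℝ} {r s : ℝ}
    (hz : z ∈ wulffBall φ y r) (hs : 0 < s) (hsr : s ≤ r) :
    ∃ y', z ∈ wulffBall φ y' s ∧ wulffBall φ y' s ⊆ wulffBall φ y r := by
  have hr : 0 < r := hs.trans_le hsr
  have hsr' : 0 ≤ 1 - s / r := by rw [sub_nonneg, div_le_one hr]; exact hsr
  refine ⟨z + (s / r) • (y - z), ?_, wulffBall_subset_wulffBall hφ ?_⟩
  · rw [mem_wulffBall, show z - (z + (s / r) • (y - z)) = (s / r) • (z - y) by module,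
      hφ.map_smul_of_nonneg (by positivity), div_mul_eq_mul_div, div_lt_iff₀ hr]
    exact mul_lt_mul_of_pos_left hz hs
  · rw [show z + (s / r) • (y - z) - y = (1 - s / r) • (z - y) by module,
      hφ.map_smul_of_nonneg hsr']
    calc (1 - s / r) * φ (z - y) ≤ (1 - s / r) * r := mul_le_mul_of_nonneg_left hz.le hsr'
      _ = r - s := by field_simp

theorem Convex.wulffBall_combo_subset (hφ : IsNorm φ) {Ω : Set (Fin n → ℝ)}
    (hΩ : Convex ℝ Ω) {x y : Fin n → ℝ} {a b l : ℝ} (ha : 0 < a) (hb : 0 < b) (hl₀ : 0 ≤ l)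
    (hl₁ : l ≤ 1) (hx : wulffBall φ x a ⊆ Ω) (hy : wulffBall φ y b ⊆ Ω) :
    wulffBall φ ((1 - l) • x + l • y) ((1 - l) * a + l * b) ⊆ Ω := by
  intro w hw
  have hρ : 0 < (1 - l) * a + l * b := by
    rcases hl₁.lt_or_eq with hl | rfl
    · nlinarith [mul_pos (sub_pos.2 hl) ha, mul_nonneg hl₀ hb.le]
    · simpa using hb
  set ρ := (1 - l) * a + l * b
  set d := w - ((1 - l) • x + l • y)
  have hscaled : ∀ {c : ℝ} {z : Fin n → ℝ}, 0 < c → wulffBall φ z c ⊆ Ω →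
      z + (c / ρ) • d ∈ Ω := fun {c z} hc hz => hz <| by
    rw [mem_wulffBall, add_sub_cancel_left, hφ.map_smul_of_nonneg (by positivity),
      div_mul_eq_mul_div, div_lt_iff₀ hρ]
    exact mul_lt_mul_of_pos_left hw hc
  have hw' : w = (1 - l) • (x + (a / ρ) • d) + l • (y + (b / ρ) • d) := by
    have : (1 - l) * (a / ρ) + l * (b / ρ) = 1 := by field_simp; rfl
    calc w = ((1 - l) • x + l • y) + ((1 - l) * (a / ρ) + l * (b / ρ)) • d := by
          rw [this, one_smul]; exact (add_sub_cancel _ _).symm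
      _ = _ := by module
  rw [hw']
  exact hΩ (hscaled ha hx) (hscaled hb hy) (by linarith) hl₀ (by ring)

end WulffBall

section Plaquette

variable {n : ℕ} {φ : (Fin n → ℝ) → ℝ} {Ω : Set (Fin n → ℝ)}

theorem plaquette_zero : plaquette φ Ω 0 = Ω := if_pos rfl

theorem mem_plaquette {r : ℝ} (hr : r ≠ 0) {z : Fin n → ℝ} :
    z ∈ plaquette φ Ω r ↔ ∃ y, wulffBall φ y r ⊆ Ω ∧ z ∈ wulffBall φ y r := by
  simp [plaquette, hr]

theorem plaquette_subset (r : ℝ) : plaquette φ Ω r ⊆ Ω := by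
  unfold plaquette
  split_ifs
  exacts [subset_rfl, iUnion₂_subset fun _ h => h]

theorem wulffBall_subset_plaquette {y : Fin n → ℝ} {r : ℝ} (hr : r ≠ 0)
    (h : wulffBall φ y r ⊆ Ω) : wulffBall φ y r ⊆ plaquette φ Ω r :=
  fun _ hz => (mem_plaquette hr).2 ⟨y, h, hz⟩

theorem isOpen_plaquette (hφ : IsNorm φ) (hΩ : IsOpen Ω) (r : ℝ) :
    IsOpen (plaquette φ Ω r) := by
  unfold plaquette
  split_ifs
  exacts [hΩ, isOpen_biUnion fun x _ => isOpen_wulffBall hφ x r]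

theorem mem_plaquette_of_mem_wulffBall (hφ : IsNorm φ) {y z : Fin n → ℝ} {r ρ : ℝ}
    (hy : wulffBall φ y ρ ⊆ Ω) (hz : z ∈ wulffBall φ y ρ) (hr : 0 ≤ r) (hrρ : r ≤ ρ) :
    z ∈ plaquette φ Ω r := by
  rcases hr.eq_or_lt with rfl | hr
  · exact plaquette_zero (φ := φ) ▸ hy hz
  obtain ⟨y', hzy', hy'⟩ := exists_mem_wulffBall_subset hφ hz hr hrρ
  exact (mem_plaquette hr.ne').2 ⟨y', hy'.trans hy, hzy'⟩

theorem plaquette_antitone (hφ : IsNorm φ) {s t : ℝ} (hs : 0 ≤ s) (hst : s ≤ t) :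
    plaquette φ Ω t ⊆ plaquette φ Ω s := by
  intro z hz
  rcases (hs.trans hst).eq_or_lt with ht | ht
  · obtain rfl : s = t := le_antisymm hst (ht ▸ hs)
    exact hz
  obtain ⟨y, hy, hzy⟩ := (mem_plaquette ht.ne').1 hz
  exact mem_plaquette_of_mem_wulffBall hφ hy hzy hs hst

theorem convex_plaquette (hφ : IsNorm φ) (hΩ : Convex ℝ Ω) (r : ℝ) :
    Convex ℝ (plaquette φ Ω r) := by
  rcases eq_or_ne r 0 with rfl | hr
  · rwa [plaquette_zero]
  intro z₁ h₁ z₂ h₂ a b ha hb hab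
  obtain ⟨y₁, hy₁, hz₁⟩ := (mem_plaquette hr).1 h₁
  obtain ⟨y₂, hy₂, hz₂⟩ := (mem_plaquette hr).1 h₂
  have hr₀ : 0 < r := (hφ.nonneg _).trans_lt hz₁
  obtain rfl : a = 1 - b := by linarith
  have hball := hΩ.wulffBall_combo_subset hφ hr₀ hr₀ hb (by linarith) hy₁ hy₂
  rw [show (1 - b) * r + b * r = r by ring] at hball
  refine (mem_plaquette hr).2 ⟨_, hball, ?_⟩
  rw [mem_wulffBall, show (1 - b) • z₁ + b • z₂ - ((1 - b) • y₁ + b • y₂)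
    = (1 - b) • (z₁ - y₁) + b • (z₂ - y₂) by module]
  calc _ ≤ (1 - b) * φ (z₁ - y₁) + b * φ (z₂ - y₂) := by
        rw [← hφ.map_smul_of_nonneg ha, ← hφ.map_smul_of_nonneg hb]
        exact hφ.add_le _ _
    _ < r := by simpa using convex_Iio r hz₁ hz₂ ha hb hab

theorem isClosed_setOf_wulffBall_subset (hφ : IsNorm φ) (Ω : Set (Fin n → ℝ)) (r : ℝ) :
    IsClosed {y | wulffBall φ y r ⊆ Ω} := by
  have : {y | wulffBall φ y r ⊆ Ω} = ⋂ z ∈ Ωᶜ, {y | r ≤ φ (z - y)} := by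
    ext y
    simp only [mem_ofPred_eq, mem_iInter, mem_compl_iff, subset_def, mem_wulffBall, ← not_lt]
    exact forall_congr' fun z => not_imp_not.symm
  rw [this]
  exact isClosed_biInter fun z _ =>
    isClosed_le continuous_const (hφ.continuous.comp (continuous_const.sub continuous_id))

theorem exists_wulffBall_subset_of_forall_lt (hφ : IsNorm φ) (hΩ : IsBounded Ω)
    {K : Set (Fin n → ℝ)} (hK : IsClosed K) {t : ℝ} (ht : 0 < t)
    (h : ∀ s ∈ Ioo 0 t, ∃ y ∈ K, wulffBall φ y s ⊆ Ω) :
    ∃ y ∈ K, wulffBall φ y t ⊆ Ω := by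
  let F : Ioo 0 t → Set (Fin n → ℝ) := fun s => K ∩ {y | wulffBall φ y s ⊆ Ω}
  have hF : ∀ s, IsClosed (F s) := fun s => hK.inter (isClosed_setOf_wulffBall_subset hφ Ω s)
  have hι : Nonempty (Ioo 0 t) := ⟨⟨t / 2, half_pos ht, half_lt_self ht⟩⟩
  obtain ⟨y, hy⟩ := IsCompact.nonempty_iInter_of_directed_nonempty_isCompact_isClosed F
    (Antitone.directed_ge fun s s' hss' =>
      inter_subset_inter_right K fun y hy => (wulffBall_mono hss').trans hy)
    (fun s => let ⟨y, hyK, hy⟩ := h s s.2; ⟨y, hyK, hy⟩)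
    (fun s => Metric.isCompact_of_isClosed_isBounded (hF s)
      (hΩ.subset fun y hy => hy.2 (mem_wulffBall_self hφ s.2.1)))
    hF
  rw [mem_iInter] at hy
  refine ⟨y, (hy hι.some).1, fun z hz => ?_⟩
  obtain ⟨s, hzs, hst⟩ := exists_between (mem_wulffBall.1 hz)
  exact (hy ⟨s, (hφ.nonneg _).trans_lt hzs, hst⟩).2 hzs

theorem mem_closure_plaquette_iff (hφ : IsNorm φ) (hΩ : IsBounded Ω) {t : ℝ} (ht : 0 < t)
    {x : Fin n → ℝ} :
    x ∈ closure (plaquette φ Ω t) ↔ ∃ y, wulffBall φ y t ⊆ Ω ∧ φ (x - y) ≤ t := by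
  refine ⟨fun hx => ?_, fun ⟨y, hy, hxy⟩ =>
    closure_mono (wulffBall_subset_plaquette ht.ne' hy) (mem_closure_wulffBall hφ ht hxy)⟩
  obtain ⟨y, hxy, hy⟩ := exists_wulffBall_subset_of_forall_lt hφ hΩ
    (hφ.isClosed_setOf_map_sub_le x t) ht fun s hs => by
      obtain ⟨x', hx'x, hx'⟩ := mem_closure_iff.1 hx _ (isOpen_wulffBall hφ x (t - s))
        (mem_wulffBall_self hφ (sub_pos.2 hs.2))
      obtain ⟨y, hy, hx'y⟩ := (mem_plaquette ht.ne').1 hx'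
      obtain ⟨y', hx'y', hy'⟩ := exists_mem_wulffBall_subset hφ hx'y hs.1 hs.2.le
      refine ⟨y', ?_, hy'.trans hy⟩
      calc φ (x - y') ≤ φ (x' - x) + φ (x' - y') := by
            simpa [hφ.map_sub_rev x' x] using hφ.add_le (x - x') (x' - y')
        _ ≤ t := by linarith [mem_wulffBall.1 hx'x, mem_wulffBall.1 hx'y']
  exact ⟨y, hy, hxy⟩

theorem mem_closure_plaquette_of_forall_lt (hφ : IsNorm φ) (hΩ : IsBounded Ω) {t : ℝ}
    (ht : 0 < t) {x : Fin n → ℝ} (hx : ∀ s ∈ Ioo 0 t, x ∈ plaquette φ Ω s) :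
    x ∈ closure (plaquette φ Ω t) := by
  obtain ⟨y, hxy, hy⟩ := exists_wulffBall_subset_of_forall_lt hφ hΩ
    (hφ.isClosed_setOf_map_sub_le x t) ht fun s hs => by
      obtain ⟨y, hy, hxy⟩ := (mem_plaquette hs.1.ne').1 (hx s hs)
      exact ⟨y, hxy.le.trans hs.2.le, hy⟩
  exact (mem_closure_plaquette_iff hφ hΩ ht).2 ⟨y, hy, hxy⟩

end Plaquette

section Radii

variable {n : ℕ} {φ : (Fin n → ℝ) → ℝ} {Ω : Set (Fin n → ℝ)}

theorem maxInradius_nonneg : 0 ≤ maxInradius φ Ω :=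
  Real.sSup_nonneg fun _ hR => hR.1.le

theorem maxRollRadius_nonneg : 0 ≤ maxRollRadius φ Ω :=
  Real.sSup_nonneg fun _ hr => hr.1.le

theorem le_maxInradius [NeZero n] (hφ : IsNorm φ) (hΩ : IsBounded Ω) {y : Fin n → ℝ} {r : ℝ}
    (hr : 0 < r) (h : wulffBall φ y r ⊆ Ω) : r ≤ maxInradius φ Ω := by
  obtain ⟨C, hC⟩ := Metric.isBounded_iff.1 hΩ
  obtain ⟨v, hv⟩ := exists_norm_eq (Fin n → ℝ) (by positivity : 0 ≤ |C| + 1)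
  refine le_csSup ⟨φ v, fun R ⟨hR, x, hx⟩ => not_lt.1 fun hlt => ?_⟩ ⟨hr, y, h⟩
  have := hC (hx (show φ (x + v - x) < R by simpa using hlt)) (hx (mem_wulffBall_self hφ hR))
  rw [dist_eq_norm, add_sub_cancel_left, hv] at this
  linarith [le_abs_self C]

theorem exists_wulffBall_maxInradius_subset (hφ : IsNorm φ) (hΩ : IsBounded Ω) :
    ∃ x₀, wulffBall φ x₀ (maxInradius φ Ω) ⊆ Ω := by
  rcases maxInradius_nonneg.eq_or_lt with h | h
  · exact ⟨0, fun z hz => ((hφ.nonneg _).trans_lt (h ▸ hz)).false.elim⟩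
  obtain ⟨y, -, hy⟩ := exists_wulffBall_subset_of_forall_lt hφ hΩ isClosed_univ h
    fun s hs => by
      obtain ⟨r, ⟨-, y, hy⟩, hsr⟩ := exists_lt_of_lt_csSup (Real.nonempty_of_sSup_pos h) hs.2
      exact ⟨y, mem_univ y, (wulffBall_mono hsr.le).trans hy⟩
  exact ⟨y, hy⟩

theorem plaquette_eq_empty_of_maxInradius_lt [NeZero n] (hφ : IsNorm φ) (hΩ : IsBounded Ω)
    {r : ℝ} (h : maxInradius φ Ω < r) : plaquette φ Ω r = ∅ := by
  have hr : 0 < r := maxInradius_nonneg.trans_lt h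
  refine eq_empty_of_forall_notMem fun z hz => ?_
  obtain ⟨y, hy, -⟩ := (mem_plaquette hr.ne').1 hz
  exact (le_maxInradius hφ hΩ hr hy).not_gt h

theorem le_maxInradius_of_rWCond [NeZero n] (hφ : IsNorm φ) (hΩ : IsBounded Ω)
    (hne : Ω.Nonempty) {r : ℝ} (hr : 0 < r) (h : rWCond φ Ω r) : r ≤ maxInradius φ Ω := by
  obtain ⟨x, hx⟩ := nonempty_frontier_iff.2
    ⟨hne, fun he => NormedSpace.unbounded_univ ℝ (Fin n → ℝ) (he ▸ hΩ)⟩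
  obtain ⟨y, hy, -⟩ := h x hx
  exact le_maxInradius hφ hΩ hr hy

theorem maxRollRadius_le_maxInradius [NeZero n] (hφ : IsNorm φ) (hΩ : IsBounded Ω) :
    maxRollRadius φ Ω ≤ maxInradius φ Ω := by
  rcases Ω.eq_empty_or_nonempty with rfl | hne
  -- every `r > 0` satisfies `rWCond φ ∅ r` vacuously, so `maxRollRadius` takes the junk value 0
  · have : {r | 0 < r ∧ rWCond φ ∅ r} = Ioi 0 := by ext; simp [rWCond]
    rw [maxRollRadius, this, Real.sSup_of_not_bddAbove (not_bddAbove_Ioi 0)]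
    exact maxInradius_nonneg
  · exact Real.sSup_le (fun r hr => le_maxInradius_of_rWCond hφ hΩ hne hr.1 hr.2)
      maxInradius_nonneg

theorem rWCond_maxRollRadius (hφ : IsNorm φ) (hΩo : IsOpen Ω) (hΩ : IsBounded Ω)
    (h : 0 < maxRollRadius φ Ω) : rWCond φ Ω (maxRollRadius φ Ω) := by
  intro x hx
  obtain ⟨y, hxy, hy⟩ := exists_wulffBall_subset_of_forall_lt hφ hΩ
    (hφ.isClosed_setOf_map_sub_le x _) h fun s hs => by
      obtain ⟨r, hr, hsr⟩ := exists_lt_of_lt_csSup (Real.nonempty_of_sSup_pos h) hs.2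
      obtain ⟨y, hy, hxy⟩ := hr.2 x hx
      exact ⟨y, (closure_wulffBall_subset hφ y r (frontier_subset_closure hxy)).trans
        (le_csSup (Real.bddAbove_of_sSup_pos h) hr), (wulffBall_mono hsr.le).trans hy⟩
  exact ⟨y, hy, mem_frontier_wulffBall_of_mem_frontier hφ hΩo h hx hy hxy⟩

theorem rWCond_of_plaquette_eq_self (hφ : IsNorm φ) (hΩo : IsOpen Ω) (hΩ : IsBounded Ω)
    {r : ℝ} (hr : 0 < r) (h : plaquette φ Ω r = Ω) : rWCond φ Ω r := by
  intro x hx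
  obtain ⟨y, hy, hxy⟩ :=
    (mem_closure_plaquette_iff hφ hΩ hr).1 (h ▸ frontier_subset_closure hx)
  exact ⟨y, hy, mem_frontier_wulffBall_of_mem_frontier hφ hΩo hr hx hy hxy⟩

theorem plaquette_eq_self_of_rWCond [NeZero n] (hφ : IsNorm φ) (hΩo : IsOpen Ω)
    (hΩ : IsBounded Ω) (hΩc : Convex ℝ Ω) {r : ℝ} (hr : 0 < r) (h : rWCond φ Ω r) :
    plaquette φ Ω r = Ω := by
  refine (plaquette_subset r).antisymm (hΩo.subset_of_subset_closure_convex
    (isOpen_plaquette hφ hΩo r) (convex_plaquette hφ hΩc r) ?_)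
  refine hΩ.subset_convexHull_frontier.trans
    (convexHull_min (fun x hx => ?_) (convex_plaquette hφ hΩc r).closure)
  obtain ⟨y, hy, hxy⟩ := h x hx
  exact closure_mono (wulffBall_subset_plaquette hr.ne' hy) (frontier_subset_closure hxy)

theorem plaquette_eq_self_of_le_maxRollRadius [NeZero n] (hφ : IsNorm φ) (hΩo : IsOpen Ω)
    (hΩ : IsBounded Ω) (hΩc : Convex ℝ Ω) {r : ℝ} (hr : 0 ≤ r)
    (hr₀ : r ≤ maxRollRadius φ Ω) : plaquette φ Ω r = Ω := by
  have hmax : plaquette φ Ω (maxRollRadius φ Ω) = Ω := by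
    rcases maxRollRadius_nonneg.eq_or_lt with h | h
    · rw [← h, plaquette_zero]
    · exact plaquette_eq_self_of_rWCond hφ hΩo hΩ hΩc h (rWCond_maxRollRadius hφ hΩo hΩ h)
  exact (plaquette_subset r).antisymm (hmax.symm.subset.trans (plaquette_antitone hφ hr hr₀))

end Radii

section Volume

variable {n : ℕ} {φ : (Fin n → ℝ) → ℝ} {Ω : Set (Fin n → ℝ)}

theorem mem_plaquette_of_mem_frontier (hφ : IsNorm φ) (hΩo : IsOpen Ω) (hΩ : IsBounded Ω)
    (hΩc : Convex ℝ Ω) {s t : ℝ} (hs : 0 ≤ s) (hst : s < t) {x : Fin n → ℝ}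
    (hx : x ∈ frontier (plaquette φ Ω t)) (hxΩ : x ∈ Ω) : x ∈ plaquette φ Ω s := by
  have ht : 0 < t := hs.trans_lt hst
  obtain ⟨y, hy, hxy⟩ := (mem_closure_plaquette_iff hφ hΩ ht).1 (frontier_subset_closure hx)
  obtain ⟨δ, hδ, hδΩ⟩ := exists_wulffBall_subset_of_mem_nhds hφ (hΩo.mem_nhds hxΩ)
  -- with this weight the blend of `W_t(y)` and `W_δ(x)` has radius `s + 2lδ ≥ s`, and it
  -- still contains `x` because `l > 0`
  set l := (t - s) / (t + δ)
  have hl : l * (t + δ) = t - s := div_mul_cancel₀ _ (add_pos ht hδ).ne'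
  have hl₀ : 0 < l := div_pos (sub_pos.2 hst) (add_pos ht hδ)
  have hl₁ : l ≤ 1 := (div_le_one (add_pos ht hδ)).2 (by linarith)
  refine mem_plaquette_of_mem_wulffBall hφ
    (hΩc.wulffBall_combo_subset hφ ht hδ hl₀.le hl₁ hy hδΩ) ?_ hs (by nlinarith)
  rw [mem_wulffBall, show x - ((1 - l) • y + l • x) = (1 - l) • (x - y) by module,
    hφ.map_smul_of_nonneg (by linarith)]
  nlinarith [mul_le_mul_of_nonneg_left hxy (sub_nonneg.2 hl₁)]

theorem not_plaquette_subset [NeZero n] (hφ : IsNorm φ) (hΩo : IsOpen Ω) (hΩ : IsBounded Ω)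
    (hΩc : Convex ℝ Ω) {s t : ℝ} (hs : maxRollRadius φ Ω ≤ s) (hst : s < t)
    (ht : t ≤ maxInradius φ Ω) : ¬ plaquette φ Ω s ⊆ plaquette φ Ω t := by
  intro hsub
  have hs₀ : 0 ≤ s := maxRollRadius_nonneg.trans hs
  have ht₀ : 0 < t := hs₀.trans_lt hst
  obtain ⟨x₀, hx₀⟩ := exists_wulffBall_maxInradius_subset hφ hΩ
  have hne : (plaquette φ Ω t).Nonempty := ⟨x₀, mem_plaquette_of_mem_wulffBall hφ hx₀
    (mem_wulffBall_self hφ (ht₀.trans_le ht)) ht₀.le ht⟩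
  by_cases hfull : plaquette φ Ω t = Ω
  · have hbdd : BddAbove {r | 0 < r ∧ rWCond φ Ω r} := ⟨_, fun r hr =>
      le_maxInradius_of_rWCond hφ hΩ (hne.mono (plaquette_subset t)) hr.1 hr.2⟩
    have : t ≤ maxRollRadius φ Ω :=
      le_csSup hbdd ⟨ht₀, rWCond_of_plaquette_eq_self hφ hΩo hΩ ht₀ hfull⟩
    linarith
  · obtain ⟨x, hxΩ, hx⟩ := hΩc.isPreconnected.inter_frontier_nonempty
      (by rwa [inter_eq_right.2 (plaquette_subset t)])
      (sdiff_nonempty.2 fun h => hfull ((plaquette_subset t).antisymm h))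
    exact ((isOpen_plaquette hφ hΩo t).frontier_eq ▸ hx).2
      (hsub (mem_plaquette_of_mem_frontier hφ hΩo hΩ hΩc hs₀ hst hx hxΩ))

theorem volume_plaquette_ne_top (hΩ : IsBounded Ω) (r : ℝ) :
    volume (plaquette φ Ω r) ≠ ⊤ :=
  (hΩ.subset (plaquette_subset r)).measure_lt_top.ne

theorem strictAntiOn_volume_plaquette [NeZero n] (hφ : IsNorm φ) (hΩo : IsOpen Ω)
    (hΩ : IsBounded Ω) (hΩc : Convex ℝ Ω) :
    StrictAntiOn (fun r => (volume (plaquette φ Ω r)).toReal)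
      (Icc (maxRollRadius φ Ω) (maxInradius φ Ω)) := by
  intro s hs t ht hst
  have hsub := plaquette_antitone (Ω := Ω) hφ (maxRollRadius_nonneg.trans hs.1) hst.le
  refine (ENNReal.toReal_lt_toReal (volume_plaquette_ne_top hΩ t)
    (volume_plaquette_ne_top hΩ s)).2 ((measure_mono hsub).lt_of_ne fun heq => ?_)
  refine not_plaquette_subset hφ hΩo hΩ hΩc hs.1 hst ht.2
    ((isOpen_plaquette hφ hΩo s).subset_of_measure_sdiff_eq_zero (μ := volume)
      (isOpen_plaquette hφ hΩo t) (convex_plaquette hφ hΩc t) ?_)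
  rw [measure_sdiff hsub (isOpen_plaquette hφ hΩo t).nullMeasurableSet
    (volume_plaquette_ne_top hΩ t), heq, tsub_self]

theorem antitoneOn_volume_plaquette (hφ : IsNorm φ) (hΩ : IsBounded Ω) :
    AntitoneOn (fun r => (volume (plaquette φ Ω r)).toReal) (Ici 0) :=
  fun s hs _ _ hst => ENNReal.toReal_mono (volume_plaquette_ne_top hΩ s)
    (measure_mono (plaquette_antitone hφ hs hst))

theorem homothety_image_plaquette_subset (hφ : IsNorm φ) (hΩo : IsOpen Ω) (hΩc : Convex ℝ Ω)
    {x₀ : Fin n → ℝ} {R s t : ℝ} (hx₀ : wulffBall φ x₀ R ⊆ Ω) (hs : 0 ≤ s) (hst : s ≤ t)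
    (htR : t ≤ R) (hsR : s < R) :
    AffineMap.homothety x₀ ((R - t) / (R - s)) '' plaquette φ Ω s ⊆ plaquette φ Ω t := by
  set l := (R - t) / (R - s)
  have hl : l * (R - s) = R - t := div_mul_cancel₀ _ (sub_pos.2 hsR).ne'
  have hl₀ : 0 ≤ l := div_nonneg (by linarith) (by linarith)
  have hl₁ : l ≤ 1 := (div_le_one (sub_pos.2 hsR)).2 (by linarith)
  have hR : 0 < R := hs.trans_lt hsR
  rintro _ ⟨z, hz, rfl⟩
  obtain ⟨ρ, y, hρ, hsρ, hy, hzy⟩ :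
      ∃ ρ y, 0 < ρ ∧ s ≤ ρ ∧ wulffBall φ y ρ ⊆ Ω ∧ z ∈ wulffBall φ y ρ := by
    rcases hs.eq_or_lt with rfl | hs
    · obtain ⟨δ, hδ, hδΩ⟩ := exists_wulffBall_subset_of_mem_nhds hφ
        (hΩo.mem_nhds (plaquette_zero (φ := φ) ▸ hz))
      exact ⟨δ, z, hδ, hδ.le, hδΩ, mem_wulffBall_self hφ hδ⟩
    · obtain ⟨y, hy, hzy⟩ := (mem_plaquette hs.ne').1 hz
      exact ⟨s, y, hs, le_rfl, hy, hzy⟩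
  refine mem_plaquette_of_mem_wulffBall hφ
    (hΩc.wulffBall_combo_subset hφ hR hρ hl₀ hl₁ hx₀ hy) ?_ (hs.trans hst)
    (by nlinarith [mul_le_mul_of_nonneg_left hsρ hl₀])
  rw [AffineMap.homothety_apply, vsub_eq_sub, vadd_eq_add, mem_wulffBall,
    show l • (z - x₀) + x₀ - ((1 - l) • x₀ + l • y) = l • (z - y) by module,
    hφ.map_smul_of_nonneg hl₀]
  rcases hl₀.eq_or_lt with hl₀ | hl₀
  · simpa [← hl₀] using hR
  · nlinarith [mul_lt_mul_of_pos_left (mem_wulffBall.1 hzy) hl₀]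

theorem pow_mul_volume_plaquette_le (hφ : IsNorm φ) (hΩo : IsOpen Ω) (hΩ : IsBounded Ω)
    (hΩc : Convex ℝ Ω) {x₀ : Fin n → ℝ} {R s t : ℝ} (hx₀ : wulffBall φ x₀ R ⊆ Ω)
    (hs : 0 ≤ s) (hst : s ≤ t) (htR : t ≤ R) (hsR : s < R) :
    ((R - t) / (R - s)) ^ n * (volume (plaquette φ Ω s)).toReal ≤
      (volume (plaquette φ Ω t)).toReal := by
  have hl₀ : 0 ≤ (R - t) / (R - s) := div_nonneg (by linarith) (by linarith)
  have h := measure_mono (μ := volume)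
    (homothety_image_plaquette_subset hφ hΩo hΩc hx₀ hs hst htR hsR)
  rw [Measure.addHaar_image_homothety, Module.finrank_fin_fun,
    abs_of_nonneg (pow_nonneg hl₀ n)] at h
  have h' := ENNReal.toReal_mono (volume_plaquette_ne_top hΩ t) h
  rwa [ENNReal.toReal_mul, ENNReal.toReal_ofReal (by positivity)] at h'

theorem continuousWithinAt_volume_plaquette_Icc_left (hφ : IsNorm φ) (hΩo : IsOpen Ω)
    (hΩ : IsBounded Ω) (hΩc : Convex ℝ Ω) {t : ℝ} (ht : 0 ≤ t) :
    ContinuousWithinAt (fun r => (volume (plaquette φ Ω r)).toReal) (Icc 0 t) t := by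
  rcases ht.eq_or_lt with rfl | ht
  · rw [Icc_self]
    exact continuousWithinAt_singleton
  obtain ⟨u, hu_mono, hu_mem, hu_lim⟩ := exists_seq_strictMono_tendsto' ht
  have hinter : volume (⋂ k, plaquette φ Ω (u k)) = volume (plaquette φ Ω t) := by
    refine le_antisymm ?_ (measure_mono (subset_iInter fun k =>
      plaquette_antitone hφ (hu_mem k).1.le (hu_mem k).2.le))
    calc volume (⋂ k, plaquette φ Ω (u k)) ≤ volume (closure (plaquette φ Ω t)) := by
          refine measure_mono fun x hx => mem_closure_plaquette_of_forall_lt hφ hΩ ht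
            fun s hs => ?_
          obtain ⟨k, hk⟩ := (hu_lim.eventually (lt_mem_nhds hs.2)).exists
          exact plaquette_antitone hφ hs.1.le hk.le (mem_iInter.1 hx k)
      _ = volume (plaquette φ Ω t) := measure_closure_of_null_frontier
          ((convex_plaquette hφ hΩc t).addHaar_frontier volume)
  have hlim : Tendsto (fun k => (volume (plaquette φ Ω (u k))).toReal) atTop
      (𝓝 (volume (plaquette φ Ω t)).toReal) := by
    rw [← hinter]
    exact (ENNReal.tendsto_toReal (hinter ▸ volume_plaquette_ne_top hΩ t)).comp
      (tendsto_measure_iInter_atTop (fun k => (isOpen_plaquette hφ hΩo _).nullMeasurableSet)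
        (fun i j hij => plaquette_antitone hφ (hu_mem i).1.le (hu_mono.monotone hij))
        ⟨0, volume_plaquette_ne_top hΩ _⟩)
  refine tendsto_order.2 ⟨fun b hb => ?_, fun b hb => ?_⟩
  · filter_upwards [self_mem_nhdsWithin] with r hr
    exact hb.trans_le (antitoneOn_volume_plaquette hφ hΩ hr.1 ht.le hr.2)
  · obtain ⟨k, hk⟩ := (hlim.eventually (gt_mem_nhds hb)).exists
    filter_upwards [self_mem_nhdsWithin, nhdsWithin_le_nhds (Ioi_mem_nhds (hu_mem k).2)]
      with r hr hkr
    exact (antitoneOn_volume_plaquette hφ hΩ (hu_mem k).1.le hr.1 hkr.le).trans_lt hk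

theorem continuousWithinAt_volume_plaquette_Icc_right (hφ : IsNorm φ) (hΩo : IsOpen Ω)
    (hΩ : IsBounded Ω) (hΩc : Convex ℝ Ω) {s : ℝ} (hs : 0 ≤ s) :
    ContinuousWithinAt (fun r => (volume (plaquette φ Ω r)).toReal)
      (Icc s (maxInradius φ Ω)) s := by
  set R := maxInradius φ Ω
  rcases le_or_gt R s with hRs | hsR
  · exact continuousWithinAt_singleton.mono fun r hr => le_antisymm (hr.2.trans hRs) hr.1
  obtain ⟨x₀, hx₀⟩ := exists_wulffBall_maxInradius_subset hφ hΩ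
  set v := fun r => (volume (plaquette φ Ω r)).toReal
  have hlower :
      Tendsto (fun t => ((R - t) / (R - s)) ^ n * v s) (𝓝[Icc s R] s) (𝓝 (v s)) := by
    have : Continuous fun t => ((R - t) / (R - s)) ^ n * v s := by fun_prop
    simpa [div_self (sub_pos.2 hsR).ne'] using (this.tendsto s).mono_left nhdsWithin_le_nhds
  exact tendsto_of_tendsto_of_tendsto_of_le_of_le' hlower tendsto_const_nhds
    (eventually_nhdsWithin_of_forall fun t ht =>
      pow_mul_volume_plaquette_le hφ hΩo hΩ hΩc hx₀ hs ht.1 ht.2 hsR)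
    (eventually_nhdsWithin_of_forall fun t ht =>
      antitoneOn_volume_plaquette hφ hΩ hs (hs.trans ht.1) ht.1)

theorem continuousOn_volume_plaquette (hφ : IsNorm φ) (hΩo : IsOpen Ω) (hΩ : IsBounded Ω)
    (hΩc : Convex ℝ Ω) :
    ContinuousOn (fun r => (volume (plaquette φ Ω r)).toReal) (Icc 0 (maxInradius φ Ω)) :=
  fun r hr => ((continuousWithinAt_volume_plaquette_Icc_left hφ hΩo hΩ hΩc hr.1).union
    (continuousWithinAt_volume_plaquette_Icc_right hφ hΩo hΩ hΩc hr.1)).mono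
    fun t ht => (le_total t r).imp (fun h => ⟨ht.1, h⟩) (fun h => ⟨h, ht.2⟩)

end Volume

/-- For a bounded convex open set `Ω ⊆ ℝ²`, the function
`v(r) = |Ω^r|` equals `|Ω|` for `0 ≤ r ≤ r_Ω`, vanishes for `r > R_Ω`, and is
continuous and monotone decreasing on `[r_Ω, R_Ω]`; consequently, for every
`m ∈ [|Ω^{R_Ω}|, |Ω|]` there is a unique `r_m ∈ [r_Ω, R_Ω]` with `|Ω^{r_m}| = m`. -/
theorem plaquette_volume_function (φ : (Fin 2 → ℝ) → ℝ) (hφ : IsNorm φ)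
    (Ω : Set (Fin 2 → ℝ)) (hΩopen : IsOpen Ω) (hΩbdd : Bornology.IsBounded Ω)
    (hΩconv : Convex ℝ Ω) :
    (∀ r : ℝ, 0 ≤ r → r ≤ maxRollRadius φ Ω →
      volume (plaquette φ Ω r) = volume Ω) ∧
    (∀ r : ℝ, maxInradius φ Ω < r → volume (plaquette φ Ω r) = 0) ∧
    ContinuousOn (fun r : ℝ => (volume (plaquette φ Ω r)).toReal)
      (Icc (maxRollRadius φ Ω) (maxInradius φ Ω)) ∧
    AntitoneOn (fun r : ℝ => (volume (plaquette φ Ω r)).toReal)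
      (Icc (maxRollRadius φ Ω) (maxInradius φ Ω)) ∧
    (∀ m : ℝ, (volume (plaquette φ Ω (maxInradius φ Ω))).toReal ≤ m →
      m ≤ (volume Ω).toReal →
      ∃! r : ℝ, r ∈ Icc (maxRollRadius φ Ω) (maxInradius φ Ω) ∧
        (volume (plaquette φ Ω r)).toReal = m) := by
  have hfull : plaquette φ Ω (maxRollRadius φ Ω) = Ω :=
    plaquette_eq_self_of_le_maxRollRadius hφ hΩopen hΩbdd hΩconv maxRollRadius_nonneg le_rfl
  have hcont := (continuousOn_volume_plaquette hφ hΩopen hΩbdd hΩconv).mono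
    (Icc_subset_Icc_left (maxRollRadius_nonneg (φ := φ) (Ω := Ω)))
  have hstrict := strictAntiOn_volume_plaquette hφ hΩopen hΩbdd hΩconv
  refine ⟨fun r hr hr₀ => by
      rw [plaquette_eq_self_of_le_maxRollRadius hφ hΩopen hΩbdd hΩconv hr hr₀],
    fun r hr => by rw [plaquette_eq_empty_of_maxInradius_lt hφ hΩbdd hr, measure_empty],
    hcont, hstrict.antitoneOn, fun m hm hm' => ?_⟩
  obtain ⟨r, hr, rfl⟩ := intermediate_value_Icc' (maxRollRadius_le_maxInradius hφ hΩbdd) hcont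
    ⟨hm, by simpa only [hfull] using hm'⟩
  exact ⟨r, ⟨hr, rfl⟩, fun r' ⟨hr', h⟩ => hstrict.injOn hr' hr h⟩

end
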